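/- Let D ∈ ℂ^{n×n} be Hermitian positive definite and let A ∈ ℂ^{n×n} be Hermitian positive semidefinite with A ≠ 0. If 0 < ω < 2 / λ_max(D^{-1/2} A D^{-1/2}), where λ_max denotes the largest eigenvalue, then there exists a > 0 such that the matrix 2ω D^{-1} − ω² D^{-1} A D^{-1} − a I_n is positive semidefinite. -/

import Mathlib

open Matrix
open scoped ComplexOrder

namespace Matrix.PosSemidef

/-- The positive semidefinite square root of a positive semidefinite matrix
(removed from Mathlib; restored with its old definition). -/
noncomputable def sqrt {n 𝕜 : Type*} [Fintype n] [DecidableEq n] [RCLike 𝕜]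
    {A : Matrix n n 𝕜} (hA : A.PosSemidef) : Matrix n n 𝕜 :=
  hA.1.eigenvectorUnitary.1 * diagonal ((↑) ∘ (√·) ∘ hA.1.eigenvalues) *
  (star hA.1.eigenvectorUnitary : Matrix n n 𝕜)

end Matrix.PosSemidef

/-!
Write `S = D^{1/2}`, `M = S⁻¹ A S⁻¹` and `L = λ_max(M)`. Then `M ≤ L`, and conjugating by `S⁻¹`
gives `D⁻¹ A D⁻¹ ≤ L D⁻¹`, so `2ω D⁻¹ - ω² D⁻¹ A D⁻¹ ≥ ω (2 - ω L) D⁻¹`. The coefficient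
`ω (2 - ω L)` is positive by the bound on `ω`, and `D⁻¹ ≥ r` for some `r > 0` because `D⁻¹` is
positive definite; take `a = ω (2 - ω L) r`. All inequalities are in the Loewner order.
-/

open scoped MatrixOrder

section StarOrderedAlgebra

variable {R : Type*} [Ring R] [PartialOrder R] [StarRing R] [StarOrderedRing R] [Algebra ℝ R]

theorem IsSelfAdjoint.mul_self_conj_le_smul_mul_self {a t : R} (ht : IsSelfAdjoint t) {L : ℝ}
    (h : t * a * t ≤ algebraMap ℝ R L) : t * t * a * (t * t) ≤ L • (t * t) := by
  have := ht.conjugate_le_conjugate h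
  rw [← Algebra.commutes, Algebra.algebraMap_eq_smul_one, smul_mul_assoc, one_mul,
    smul_mul_assoc] at this
  simpa only [mul_assoc] using this

end StarOrderedAlgebra

namespace Matrix

variable {n 𝕜 : Type*} [Fintype n] [DecidableEq n] [RCLike 𝕜]

theorem PosSemidef.sqrt_eq_cfcSqrt {A : Matrix n n 𝕜} (hA : A.PosSemidef) :
    hA.sqrt = CFC.sqrt A := by
  rw [CFC.sqrt_eq_real_sqrt A hA.nonneg, cfcₙ_eq_cfc, hA.1.cfc_eq, IsHermitian.cfc,
    Unitary.conjStarAlgAut_apply]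
  rfl

theorem IsHermitian.le_algebraMap_iSup_eigenvalues {H : Matrix n n 𝕜} (hH : H.IsHermitian) :
    H ≤ algebraMap ℝ _ (⨆ i, hH.eigenvalues i) := by
  refine le_algebraMap_of_spectrum_le (fun x hx => ?_) hH.isSelfAdjoint
  obtain ⟨i, rfl⟩ := hH.spectrum_real_eq_range_eigenvalues ▸ hx
  exact le_ciSup (Set.finite_range _).bddAbove i

theorem PosDef.exists_pos_algebraMap_le {D : Matrix n n 𝕜} (hD : D.PosDef) :
    ∃ r > 0, algebraMap ℝ _ r ≤ D := by
  cases subsingleton_or_nontrivial (Matrix n n 𝕜)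
  · exact ⟨1, one_pos, (Subsingleton.elim _ _).le⟩
  · exact (CFC.exists_pos_algebraMap_le_iff hD.isHermitian.isSelfAdjoint).2
      fun _ hx => hD.isStrictlyPositive.spectrum_pos hx

end Matrix

theorem stmt6_general {n : ℕ} (D A : Matrix (Fin n) (Fin n) ℂ)
    (hD : D.PosDef)
    (hM : ((PosSemidef.sqrt hD.posSemidef)⁻¹ * A * (PosSemidef.sqrt hD.posSemidef)⁻¹).IsHermitian)
    (ω : ℝ) (hω0 : 0 < ω) (hω2 : ω < 2 / ⨆ i, hM.eigenvalues i) :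
    ∃ a : ℝ, 0 < a ∧
      (((2 * ω : ℝ) : ℂ) • D⁻¹ - ((ω ^ 2 : ℝ) : ℂ) • (D⁻¹ * A * D⁻¹) -
        (a : ℂ) • (1 : Matrix (Fin n) (Fin n) ℂ)).PosSemidef := by
  set L := ⨆ i, hM.eigenvalues i
  have hL : 0 < L := (div_pos_iff_of_pos_left two_pos).mp (hω0.trans hω2)
  have hε : 0 < ω * (2 - ω * L) := mul_pos hω0 (by linarith [(lt_div_iff₀ hL).mp hω2])
  have hsqrt : CFC.sqrt D⁻¹ * CFC.sqrt D⁻¹ = D⁻¹ :=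
    CFC.sqrt_mul_sqrt_self _ hD.inv.posSemidef.nonneg
  have hM_le : CFC.sqrt D⁻¹ * A * CFC.sqrt D⁻¹ ≤ algebraMap ℝ _ L := by
    have : _ ≤ algebraMap ℝ _ L := hM.le_algebraMap_iSup_eigenvalues
    rwa [PosSemidef.sqrt_eq_cfcSqrt, hD.posSemidef.inv_sqrt] at this
  have hDAD : D⁻¹ * A * D⁻¹ ≤ L • D⁻¹ := by
    simpa only [hsqrt] using
      (CFC.sqrt_nonneg D⁻¹).isSelfAdjoint.mul_self_conj_le_smul_mul_self hM_le
  obtain ⟨r, hr, hrD⟩ := hD.inv.exists_pos_algebraMap_le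
  refine ⟨ω * (2 - ω * L) * r, mul_pos hε hr, ?_⟩
  rw [← le_iff]
  simp only [Complex.coe_smul]
  calc (ω * (2 - ω * L) * r) • 1 = (ω * (2 - ω * L)) • algebraMap ℝ _ r := by
        rw [Algebra.algebraMap_eq_smul_one, smul_smul]
    _ ≤ (ω * (2 - ω * L)) • D⁻¹ := by gcongr
    _ = (2 * ω) • D⁻¹ - ω ^ 2 • (L • D⁻¹) := by module
    _ ≤ (2 * ω) • D⁻¹ - ω ^ 2 • (D⁻¹ * A * D⁻¹) := by gcongr

/-- If `D` is HPD, `A` is HPSD and nonzero, and `0 < ω < 2/λ_max(D^{-1/2} A D^{-1/2})`,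
then there exists `a > 0` with `2ω D⁻¹ - ω² D⁻¹ A D⁻¹ - a·I` positive semidefinite. -/
theorem stmt6 {n : ℕ} (D A : Matrix (Fin n) (Fin n) ℂ)
    (hD : D.PosDef) (hA : A.PosSemidef) (hA0 : A ≠ 0)
    (hM : ((PosSemidef.sqrt hD.posSemidef)⁻¹ * A * (PosSemidef.sqrt hD.posSemidef)⁻¹).IsHermitian)
    (ω : ℝ) (hω0 : 0 < ω) (hω2 : ω < 2 / ⨆ i, hM.eigenvalues i) :
    ∃ a : ℝ, 0 < a ∧
      (((2 * ω : ℝ) : ℂ) • D⁻¹ - ((ω ^ 2 : ℝ) : ℂ) • (D⁻¹ * A * D⁻¹) -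
        (a : ℂ) • (1 : Matrix (Fin n) (Fin n) ℂ)).PosSemidef :=
  stmt6_general D A hD hM ω hω0 hω2
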